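/- arXiv:2203.15872 — 3 statements merged into one kernel-verified Lean document; each statement's English description precedes it below -/
import Mathlib

section
/- The point of minimum norm in the half-plane {l ∈ ℝ² : ‖l - x_a‖ ≤ ‖l - x_d‖}, for ‖x_a‖ > ‖x_d‖, is l* = ((‖x_a‖² - ‖x_d‖²)/(2‖x_a - x_d‖²)) · (x_a - x_d); in particular l* is parallel to x_a - x_d. -/
open scoped RealInnerProductSpace

/-! The set of points at least as close to `a` as to `d` is the half-space
`(‖a‖² - ‖d‖²) / 2 ≤ ⟪l, a - d⟫`. When its offset `c` is nonnegative, Cauchy–Schwarz gives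
`c ≤ ‖l‖ ‖a - d‖` on it, and the foot of the perpendicular from the origin,
`(c / ‖a - d‖²) • (a - d)`, attains this bound. -/

section

variable {E : Type*} [NormedAddCommGroup E] [InnerProductSpace ℝ E]

theorem norm_sub_le_norm_sub_iff_inner (l a d : E) :
    ‖l - a‖ ≤ ‖l - d‖ ↔ (‖a‖ ^ 2 - ‖d‖ ^ 2) / 2 ≤ ⟪l, a - d⟫ := by
  rw [← sq_le_sq₀ (norm_nonneg _) (norm_nonneg _), norm_sub_sq_real, norm_sub_sq_real,
    inner_sub_right]
  constructor <;> intro h <;> linarith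

theorem inner_div_norm_sq_smul_self (c : ℝ) {u : E} (hu : u ≠ 0) :
    ⟪(c / ‖u‖ ^ 2) • u, u⟫ = c := by
  have : ‖u‖ ≠ 0 := norm_ne_zero_iff.mpr hu
  rw [real_inner_smul_left, real_inner_self_eq_norm_sq]
  field_simp

theorem norm_div_norm_sq_smul_le_of_le_inner {c : ℝ} {u l : E} (hc : 0 ≤ c)
    (hl : c ≤ ⟪l, u⟫) : ‖(c / ‖u‖ ^ 2) • u‖ ≤ ‖l‖ := by
  rcases eq_or_ne u 0 with rfl | hu
  · simp
  have hu' : 0 < ‖u‖ := norm_pos_iff.mpr hu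
  have hcs : c ≤ ‖l‖ * ‖u‖ := hl.trans (real_inner_le_norm l u)
  calc ‖(c / ‖u‖ ^ 2) • u‖ = c / ‖u‖ := by
        rw [norm_smul, Real.norm_of_nonneg (by positivity)]
        field_simp
    _ ≤ ‖l‖ := (div_le_iff₀ hu').mpr hcs

end

theorem min_norm_point_of_safe_reachable_set_general
    (xa xd : EuclideanSpace ℝ (Fin 2)) (hnorm : ‖xd‖ < ‖xa‖) :
    ((‖xa‖ ^ 2 - ‖xd‖ ^ 2) / (2 * ‖xa - xd‖ ^ 2)) • (xa - xd) ∈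
        {l : EuclideanSpace ℝ (Fin 2) | ‖l - xa‖ ≤ ‖l - xd‖} ∧
      ∀ l ∈ {l : EuclideanSpace ℝ (Fin 2) | ‖l - xa‖ ≤ ‖l - xd‖},
        ‖((‖xa‖ ^ 2 - ‖xd‖ ^ 2) / (2 * ‖xa - xd‖ ^ 2)) • (xa - xd)‖ ≤ ‖l‖ := by
  have hu : xa - xd ≠ 0 := sub_ne_zero.mpr fun h => hnorm.ne (by rw [h])
  have hc : 0 ≤ (‖xa‖ ^ 2 - ‖xd‖ ^ 2) / 2 := by nlinarith [norm_nonneg xd]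
  simp only [Set.mem_ofPred_eq, norm_sub_le_norm_sub_iff_inner, ← div_div]
  exact ⟨(inner_div_norm_sq_smul_self _ hu).ge,
    fun l hl => norm_div_norm_sq_smul_le_of_le_inner hc hl⟩

/-- The minimum-norm point of the safe reachable set is an explicit multiple
of `xa - xd` (in particular it is parallel to `xa - xd`). -/
theorem min_norm_point_of_safe_reachable_set
    (xa xd : EuclideanSpace ℝ (Fin 2)) (hne : xa ≠ xd) (hnorm : ‖xd‖ < ‖xa‖) :
    ((‖xa‖ ^ 2 - ‖xd‖ ^ 2) / (2 * ‖xa - xd‖ ^ 2)) • (xa - xd) ∈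
        {l : EuclideanSpace ℝ (Fin 2) | ‖l - xa‖ ≤ ‖l - xd‖} ∧
      ∀ l ∈ {l : EuclideanSpace ℝ (Fin 2) | ‖l - xa‖ ≤ ‖l - xd‖},
        ‖((‖xa‖ ^ 2 - ‖xd‖ ^ 2) / (2 * ‖xa - xd‖ ^ 2)) • (xa - xd)‖ ≤ ‖l‖ :=
  min_norm_point_of_safe_reachable_set_general xa xd hnorm
end

section
/- For r > √2, p < r/2, q = (r/2)·tan ψ with ψ ∈ [0, π/2): r² - 1 + 2q·sin ψ - 2p(r - cos ψ) > 0. -/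
/-!
Since `tan ψ * sin ψ = 1 / cos ψ - cos ψ`, the `q`-term equals `r / cos ψ - r cos ψ`.
As `2p < r` and `r - cos ψ > 0`, the last term is less than `r² - r cos ψ`, so the numerator
exceeds `r / cos ψ - 1 ≥ r - 1 > 0`.
-/

open Real

theorem Real.tan_mul_sin_eq_inv_cos_sub_cos {x : ℝ} (hx : cos x ≠ 0) :
    tan x * sin x = (cos x)⁻¹ - cos x := by
  rw [tan_eq_sin_div_cos]
  field_simp
  linear_combination sin_sq_add_cos_sq x

theorem sq_sub_one_add_mul_inv_sub_sub_pos {r p c : ℝ} (hr : 1 < r) (hp : p < r / 2)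
    (hc : c ∈ Set.Ioc 0 1) : 0 < r ^ 2 - 1 + r * (c⁻¹ - c) - 2 * p * (r - c) := by
  obtain ⟨hc0, hc1⟩ := hc
  have hlast : 2 * p * (r - c) < r * (r - c) :=
    mul_lt_mul_of_pos_right (by linarith) (by linarith)
  have hinv : r ≤ r * c⁻¹ := le_mul_of_one_le_right (by linarith) (one_le_inv_iff₀.2 ⟨hc0, hc1⟩)
  linarith

/-- Positivity of the numerator of the new defense margin after the DM step. -/
theorem dm_numerator_pos
    (r p q ψ : ℝ) (hr : Real.sqrt 2 < r) (hp : p < r / 2)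
    (hq : q = (r / 2) * Real.tan ψ) (hψ : ψ ∈ Set.Ico 0 (π / 2)) :
    0 < r ^ 2 - 1 + 2 * q * Real.sin ψ - 2 * p * (r - Real.cos ψ) := by
  have hcos : cos ψ ∈ Set.Ioc 0 1 :=
    ⟨cos_pos_of_mem_Ioo ⟨by linarith [hψ.1, pi_pos], hψ.2⟩, cos_le_one ψ⟩
  have hq_term : 2 * q * sin ψ = r * ((cos ψ)⁻¹ - cos ψ) := by
    rw [hq, ← tan_mul_sin_eq_inv_cos_sub_cos hcos.1.ne']
    ring
  rw [hq_term]
  exact sq_sub_one_add_mul_inv_sub_sub_pos (one_lt_sqrt_two.trans hr) hp hcos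
end

section
/- Let r > √2, ψ ∈ [0, π/2), p < r/2, q = (r/2) tan ψ. Then the distance from the point (p,q) to the perpendicular bisector of the segment joining (cos ψ, sin ψ) and (r, 0), namely |r² - 1 + 2q sin ψ - 2p(r - cos ψ)| / (2√((r - cos ψ)² + sin² ψ)), is strictly greater than (r - cos ψ) / (2 cos ψ √((r - cos ψ)² + sin² ψ)). -/
open Real

/-- Key intermediate bound in Theorem 2: the new defense margin after the DM
step strictly exceeds `(r - cos ψ) / (2 cos ψ √((r - cos ψ)² + sin² ψ))`. -/
theorem dm_new_margin_strict_bound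
    (r p q ψ : ℝ) (hr : Real.sqrt 2 < r) (hψ : ψ ∈ Set.Ico 0 (π / 2))
    (hp : p < r / 2) (hq : q = (r / 2) * Real.tan ψ) :
    (r - Real.cos ψ) /
        (2 * Real.cos ψ * Real.sqrt ((r - Real.cos ψ) ^ 2 + Real.sin ψ ^ 2))
      < |r ^ 2 - 1 + 2 * q * Real.sin ψ - 2 * p * (r - Real.cos ψ)| /
          (2 * Real.sqrt ((r - Real.cos ψ) ^ 2 + Real.sin ψ ^ 2)) := by
  obtain ⟨hψ0, hψ1⟩ := hψ
  have hc : 0 < Real.cos ψ := by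
    apply Real.cos_pos_of_mem_Ioo
    constructor
    · linarith [Real.pi_pos]
    · exact hψ1
  have h1r : (1 : ℝ) < r := by
    nlinarith [Real.sq_sqrt (show (0:ℝ) ≤ 2 by norm_num), Real.sqrt_nonneg 2]
  have hcle : Real.cos ψ ≤ 1 := Real.cos_le_one ψ
  have hrc : 0 < r - Real.cos ψ := by linarith
  have hS : 0 < Real.sqrt ((r - Real.cos ψ) ^ 2 + Real.sin ψ ^ 2) := by
    apply Real.sqrt_pos.mpr
    nlinarith [sq_nonneg (Real.sin ψ), pow_pos hrc 2]
  have hpyth := Real.sin_sq_add_cos_sq ψ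
  have key : (r - Real.cos ψ) / Real.cos ψ
      < r ^ 2 - 1 + 2 * q * Real.sin ψ - 2 * p * (r - Real.cos ψ) := by
    subst hq
    rw [Real.tan_eq_sin_div_cos, div_lt_iff₀ hc]
    have h2p : 0 < r - 2 * p := by linarith
    have hexp : 2 * (r / 2 * (Real.sin ψ / Real.cos ψ)) * Real.sin ψ
        = r * Real.sin ψ ^ 2 / Real.cos ψ := by
      field_simp
    rw [hexp]
    have : r * Real.sin ψ ^ 2 / Real.cos ψ * Real.cos ψ = r * Real.sin ψ ^ 2 := by
      field_simp
    nlinarith [mul_pos (mul_pos hc hrc) h2p]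
  have habs : (r - Real.cos ψ) / Real.cos ψ
      < |r ^ 2 - 1 + 2 * q * Real.sin ψ - 2 * p * (r - Real.cos ψ)| :=
    lt_of_lt_of_le key (le_abs_self _)
  have hnum : r - Real.cos ψ
      < |r ^ 2 - 1 + 2 * q * Real.sin ψ - 2 * p * (r - Real.cos ψ)| * Real.cos ψ :=
    (div_lt_iff₀ hc).mp habs
  rw [div_lt_div_iff₀ (by positivity) (by positivity)]
  nlinarith [mul_lt_mul_of_pos_right hnum (by positivity : (0:ℝ) < 2 * Real.sqrt ((r - Real.cos ψ) ^ 2 + Real.sin ψ ^ 2))]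
end
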